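/- Let γ be an (ε)-contour in Λ(l) at σ with 0 ∈ Θ(γ) and |γ| < 2l. Then Δ_γ H^ω_{Λ(l)}(σ) ≥ 2|γ|/9. -/

import Mathlib

open Finset

/-! ### Basic lattice notions for the 2-D Ising model on the square Λ(l) -/

abbrev Site := ℤ × ℤ

/-- `l¹`-distance on `ℤ²`. -/
def d1 (x y : Site) : ℤ := |x.1 - y.1| + |x.2 - y.2|

/-- `l∞`-distance on `ℤ²`. -/
def dinf (x y : Site) : ℤ := max |x.1 - y.1| |x.2 - y.2|

/-- There is a path from `x` to `y` inside `S` with steps of `d`-distance 1. -/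
def ChainIn (d : Site → Site → ℤ) (S : Set Site) (x y : Site) : Prop :=
  ∃ L : List Site, L.Chain' (fun a b => d a b = 1) ∧ L.head? = some x ∧
    L.getLast? = some y ∧ ∀ a ∈ L, a ∈ S

/-- `S` is connected with respect to steps of `d`-distance 1. -/
def ConnIn (d : Site → Site → ℤ) (S : Set Site) : Prop :=
  ∀ x ∈ S, ∀ y ∈ S, ChainIn d S x y

def lamLo (l : ℕ) : ℤ := 1 - (((l + 1) / 2 : ℕ) : ℤ)
def lamHi (l : ℕ) : ℤ := ((l / 2 : ℕ) : ℤ)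

/-- The lamBox the box. -/
noncomputable def lamBox (l : ℕ) : Finset Site := Finset.Icc (lamLo l, lamLo l) (lamHi l, lamHi l)

/-- The exterior boundary `∂_ex Λ(l)`. -/
def extBdry (l : ℕ) : Set Site := {y | y ∉ lamBox l ∧ ∃ x ∈ lamBox l, d1 x y = 1}

/-- An interval of `∂_ex Λ(l)` : an `l∞`-connected subset of it. -/
def IsBdryInterval (l : ℕ) (I : Finset Site) : Prop :=
  (↑I : Set Site) ⊆ extBdry l ∧ ConnIn dinf ↑I

/-- The four nearest neighbours of a site. -/
def nbrs (x : Site) : Finset Site :=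
  {(x.1 + 1, x.2), (x.1 - 1, x.2), (x.1, x.2 + 1), (x.1, x.2 - 1)}

/-- A dual bond, recorded by its two endpoints `v`, a dual vertex `v` standing for the
point `v + (1/2, 1/2)` of the dual lattice. -/
abbrev DBond := Sym2 Site

/-- The dual bond of the nearest-neighbour bond `{x, y}`. -/
def dualBond (x y : Site) : DBond :=
  if x.2 = y.2 then s((min x.1 y.1, x.2 - 1), (min x.1 y.1, x.2))
  else s((x.1 - 1, min x.2 y.2), (x.1, min x.2 y.2))

/-- `∂Q(Θ)` : the set of dual bonds separating `Θ` from its complement. -/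
def contourOf (Θ : Finset Site) : Finset DBond :=
  Θ.biUnion fun x => ((nbrs x).filter (· ∉ Θ)).image fun y => dualBond x y

/-- `Θ` and its complement are `l¹`-connected, so that `∂Q(Θ)` is a contour. -/
def IsContourRegion (Θ : Finset Site) : Prop :=
  ConnIn d1 ↑Θ ∧ ConnIn d1 ((↑Θ : Set Site)ᶜ)

/-- `∂Q(Λ(l))`, as a set of dual bonds. -/
noncomputable def boxBdry (l : ℕ) : Finset DBond := contourOf (lamBox l)

/-- The dual vertex `v` lies on the side `F_l^j` of `Q(Λ(l))` (`j ∈ {1,-1,2,-2}` for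
right, left, top, bottom). -/
def onSide (l : ℕ) (j : ℤ) (v : Site) : Prop :=
  (j = 1 ∧ v.1 = lamHi l ∧ lamLo l - 1 ≤ v.2 ∧ v.2 ≤ lamHi l) ∨
  (j = -1 ∧ v.1 = lamLo l - 1 ∧ lamLo l - 1 ≤ v.2 ∧ v.2 ≤ lamHi l) ∨
  (j = 2 ∧ v.2 = lamHi l ∧ lamLo l - 1 ≤ v.1 ∧ v.1 ≤ lamHi l) ∨
  (j = -2 ∧ v.2 = lamLo l - 1 ∧ lamLo l - 1 ≤ v.1 ∧ v.1 ≤ lamHi l)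

/-- The set of dual bonds `γ` meets the side `F_l^j`. -/
def touches (l : ℕ) (j : ℤ) (γ : Finset DBond) : Prop :=
  ∃ e ∈ γ, ∃ v : Site, v ∈ e ∧ onSide l j v

def HorizCrossing (l : ℕ) (γ : Finset DBond) : Prop := touches l 1 γ ∧ touches l (-1) γ
def VertCrossing (l : ℕ) (γ : Finset DBond) : Prop := touches l 2 γ ∧ touches l (-2) γ

/-- `γ` is neither horizontally nor vertically crossing. -/
def NonCrossing (l : ℕ) (γ : Finset DBond) : Prop :=
  ¬ (HorizCrossing l γ ∨ VertCrossing l γ)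

/-- Two dual bonds are adjacent if they share a dual vertex. -/
def DAdj (a b : DBond) : Prop := ∃ v : Site, v ∈ a ∧ v ∈ b

/-- A set of dual bonds is connected (via shared dual vertices). -/
def DConn (S : Finset DBond) : Prop :=
  ∀ e ∈ S, ∀ f ∈ S, ∃ L : List DBond, L.Chain' DAdj ∧ L.head? = some e ∧
    L.getLast? = some f ∧ ∀ a ∈ L, a ∈ S

/-- Dual bonds separating `Θt` from `Λ(l) \ Θt` inside the lamBox. -/
noncomputable def interiorBdry (l : ℕ) (Θt : Finset Site) : Finset DBond :=
  Θt.biUnion fun x => ((nbrs x).filter fun y => y ∈ lamBox l ∧ y ∉ Θt).image fun y => dualBond x y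

/-- The sites of `Λ(l)` along the side `F_l^j`. -/
def sideSites (l : ℕ) (j : ℤ) (x : Site) : Prop :=
  x ∈ lamBox l ∧ ((j = 1 ∧ x.1 = lamHi l) ∨ (j = -1 ∧ x.1 = lamLo l) ∨
    (j = 2 ∧ x.2 = lamHi l) ∨ (j = -2 ∧ x.2 = lamLo l))

/-- The data of the distinguished connected component `γ̲ = γu` of `γ \ ∂Q(Λ(l))` and of the
region `Θ̃ = Θt` into which a non-crossing contour `γ = ∂Q(Θ)` divides the lamBox: `γu` is a
connected component of `γ \ ∂Q(Λ(l))` dividing `Λ(l)` into the `l¹`-connected pieces `Θt` and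
`Λ(l) \ Θt`, with `Θ ⊆ Θt` and `F_l^i ∪ F_l^j ⊆ ∂Q(Λ(l) \ Θt)` for untouched sides `i, j`. -/
def UnderlineData (l : ℕ) (Θ : Finset Site) (γu : Finset DBond) (Θt : Finset Site) : Prop :=
  γu ⊆ contourOf Θ \ boxBdry l ∧ DConn γu ∧
  (∀ e ∈ contourOf Θ \ boxBdry l, e ∉ γu → ∀ f ∈ γu, ¬ DAdj e f) ∧
  Θ ⊆ Θt ∧ Θt ⊆ lamBox l ∧ ConnIn d1 ↑Θt ∧ ConnIn d1 ↑(lamBox l \ Θt) ∧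
  interiorBdry l Θt = γu ∧
  ∃ i j : ℤ, (i = 1 ∨ i = -1) ∧ (j = 2 ∨ j = -2) ∧
    ¬ touches l i (contourOf Θ) ∧ ¬ touches l j (contourOf Θ) ∧
    (∀ x, sideSites l i x → x ∉ Θt) ∧ (∀ x, sideSites l j x → x ∉ Θt)

/-- `γ̄ = ∂Q(Λ(l)) ∩ ∂Q(Θ̃)`. -/
noncomputable def gammaBar (l : ℕ) (Θt : Finset Site) : Finset DBond := boxBdry l ∩ contourOf Θt

/-- `V_ex(γ)` : sites of the exterior boundary attached to dual bonds of `γ`. -/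
noncomputable def Vex (l : ℕ) (γ : Finset DBond) : Finset Site :=
  (lamBox l).biUnion fun x => (nbrs x).filter fun y => y ∉ lamBox l ∧ dualBond x y ∈ γ

/-- `T_Θ` : flip the spins in `Θ`. -/
def flipC (Θ : Finset Site) (σ : Site → ℤ) : Site → ℤ :=
  fun x => if x ∈ Θ then -σ x else σ x

/-- The Ising Hamiltonian `H^ω_{Λ(l)}(σ)` with boundary condition `ω`. -/
noncomputable def Ham (l : ℕ) (ω : Site → ℝ) (σ : Site → ℤ) : ℝ :=
  -(1/2) * ∑ x ∈ lamBox l, ∑ y ∈ (nbrs x).filter (· ∈ lamBox l), ((σ x * σ y : ℤ) : ℝ)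
    - ∑ x ∈ lamBox l, ∑ y ∈ (nbrs x).filter (· ∉ lamBox l), (σ x : ℝ) * ω y

/-- `Δ_{γ₁,…,γ_p} H^ω_{Λ(l)}(σ) = H(σ) - H(T_{γ₁}∘⋯∘T_{γ_p} σ)`, the contours being
recorded by their regions `Θ(γ_j)`. -/
noncomputable def dH (l : ℕ) (ω : Site → ℝ) (Θs : List (Finset Site)) (σ : Site → ℤ) : ℝ :=
  Ham l ω σ - Ham l ω (Θs.foldr flipC σ)

/-- `C` is an (ε)-cluster in `Λ(l)` at `σ` : a maximal `l¹`-connected component of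
`{x ∈ Λ(l) : σ_x = ε}`. -/
def IsCluster (l : ℕ) (σ : Site → ℤ) (ε : ℤ) (C : Finset Site) : Prop :=
  C.Nonempty ∧ (∀ x ∈ C, x ∈ lamBox l ∧ σ x = ε) ∧ ConnIn d1 ↑C ∧
  ∀ y ∈ lamBox l, σ y = ε → (∃ x ∈ C, d1 x y = 1) → y ∈ C

/-- The `l¹`-connected component of `x` within `S`. -/
def l1Comp (S : Set Site) (x : Site) : Set Site := {y | ChainIn d1 S x y}

/-- `C` together with the bounded components of its complement; `∂Q(fill C)` is the outer
boundary of `Q(C)`. -/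
def fill (C : Finset Site) : Set Site :=
  ↑C ∪ {x | (l1Comp ((↑C : Set Site)ᶜ) x).Finite}

/-- `Θ` is the region `Θ(γ)` of an (ε)-contour `γ` in `Λ(l)` at `σ`. -/
def IsEContour (l : ℕ) (σ : Site → ℤ) (ε : ℤ) (Θ : Finset Site) : Prop :=
  ∃ C : Finset Site, IsCluster l σ ε C ∧ (↑Θ : Set Site) = fill C

/-- A dual bond is horizontal. -/
def isHorizD (e : DBond) : Prop := ∃ v w : Site, e = s(v, w) ∧ v.2 = w.2

/-- A dual bond is vertical. -/
def isVertD (e : DBond) : Prop := ∃ v w : Site, e = s(v, w) ∧ v.1 = w.1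

open Classical in
/-- The number of horizontal dual bonds in `γ`. -/
noncomputable def horizCount (γ : Finset DBond) : ℕ := (γ.filter isHorizD).card

open Classical in
/-- The number of vertical dual bonds in `γ`. -/
noncomputable def vertCount (γ : Finset DBond) : ℕ := (γ.filter isVertD).card

/-! ### Glauber dynamics -/

/-- Configurations on a finite `Λ ⊂ ℤ²` (`true` = spin `+1`, `false` = spin `-1`). -/
abbrev Cfg (Λ : Finset Site) := ↥Λ → Bool

/-- The spin value of a Boolean. -/
def spinVal (b : Bool) : ℝ := if b then 1 else -1

/-- The Ising Hamiltonian on a general finite `Λ`. -/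
noncomputable def HamG (Λ : Finset Site) (ω : Site → ℝ) (σ : Cfg Λ) : ℝ :=
  -(1/2) * ∑ x : ↥Λ, ∑ y : ↥Λ, (if d1 ↑x ↑y = 1 then spinVal (σ x) * spinVal (σ y) else 0)
    - ∑ x : ↥Λ, ∑ y ∈ (nbrs ↑x).filter (· ∉ Λ), spinVal (σ x) * ω y

/-- The finite-volume Gibbs measure `μ^ω_Λ` at inverse temperature `β`. -/
noncomputable def gibbs (Λ : Finset Site) (ω : Site → ℝ) (β : ℝ) (σ : Cfg Λ) : ℝ :=
  Real.exp (-β * HamG Λ ω σ) / ∑ τ : Cfg Λ, Real.exp (-β * HamG Λ ω τ)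

/-- The mean of `f` under the weights `μ`. -/
noncomputable def meanW (Λ : Finset Site) (μ f : Cfg Λ → ℝ) : ℝ := ∑ σ : Cfg Λ, μ σ * f σ

/-- `σ^x` : flip the spin at `x`. -/
def flipAt (Λ : Finset Site) (σ : Cfg Λ) (x : ↥Λ) : Cfg Λ := Function.update σ x (!(σ x))

/-- The generator `A^ω_Λ` of the stochastic Ising model with flip rates `q`. -/
noncomputable def genA (Λ : Finset Site) (q : ↥Λ → Cfg Λ → ℝ) (f : Cfg Λ → ℝ) (σ : Cfg Λ) : ℝ :=
  ∑ x : ↥Λ, q x σ * (f (flipAt Λ σ x) - f σ)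

/-- The variance `μ(|f - μf|²)`. -/
noncomputable def varW (Λ : Finset Site) (μ f : Cfg Λ → ℝ) : ℝ :=
  meanW Λ μ (fun σ => |f σ - meanW Λ μ f| ^ 2)

/-- The spectral gap `gap(Λ, ω, β)` : the infimum of the Rayleigh quotients
`-μ(f A f) / μ(|f - μf|²)`. -/
noncomputable def specGap (Λ : Finset Site) (ω : Site → ℝ) (β : ℝ)
    (q : ↥Λ → Cfg Λ → ℝ) : ℝ :=
  sInf { r | ∃ f : Cfg Λ → ℝ, varW Λ (gibbs Λ ω β) f ≠ 0 ∧
    r = (- meanW Λ (gibbs Λ ω β) fun σ => f σ * genA Λ q f σ) / varW Λ (gibbs Λ ω β) f }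

/-- The `±1`-spin function of a configuration on `Λ(l)` (`0` outside the lamBox). -/
noncomputable def toSpin (l : ℕ) (σ : Cfg (lamBox l)) : Site → ℤ :=
  fun x => if h : x ∈ lamBox l then (if σ ⟨x, h⟩ then 1 else -1) else 0

/-- The magnetization at the origin, `μ^ω_{Λ(l)}(σ₀)`. -/
noncomputable def magZero (l : ℕ) (ω : Site → ℝ) (β : ℝ) : ℝ :=
  ∑ σ : Cfg (lamBox l), gibbs (lamBox l) ω β σ * ((toSpin l σ (0, 0) : ℤ) : ℝ)

/-- The favoured sign `ε_{l,ω}`. -/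
noncomputable def epsSign (l : ℕ) (ω : Site → ℝ) (β : ℝ) : ℤ :=
  if 0 ≤ magZero l ω β then 1 else -1

/-- The trap event `Γ_l` : some (ε)-contour `γ` at `σ` meets `∂Q(Λ(l))` and has
`|γ| ≥ 2δ₁ l`. -/
def GammaEvent (l : ℕ) (δ₁ : ℝ) (ε : ℤ) : Set (Cfg (lamBox l)) :=
  {σ | ∃ Θ : Finset Site, IsEContour l (toSpin l σ) ε Θ ∧
    (contourOf Θ ∩ boxBdry l).Nonempty ∧ 2 * δ₁ * l ≤ ((contourOf Θ).card : ℝ)}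

open Classical in
/-- The Gibbs probability of an event `S ⊂ Ω_{Λ(l)}`. -/
noncomputable def probOf (l : ℕ) (ω : Site → ℝ) (β : ℝ) (S : Set (Cfg (lamBox l))) : ℝ :=
  ∑ σ ∈ Finset.univ.filter (· ∈ S), gibbs (lamBox l) ω β σ

/-- Union of the contours of a list of regions. -/
def unionB (L : List (Finset Site)) : Finset DBond :=
  L.foldr (fun Θ s => contourOf Θ ∪ s) ∅

/-- Union of a list of regions. -/
def unionR (L : List (Finset Site)) : Finset Site :=
  L.foldr (· ∪ ·) ∅

/-!
Θ = fill C lies in Λ(l). Flipping Θ gains 2 for every bond of γ inside Λ(l) and loses at most 2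
for every bond of γ on ∂Q(Λ(l)), so Δ_γH ≥ 2|γ| − 4·#(γ ∩ ∂Q(Λ(l))).

Every row (column) met by Θ carries at least two horizontal (vertical) bonds of γ, and the rows
and columns met by Θ are those met by the connected cluster C: intervals containing 0. A side of
the box touched by γ thus forces at least l/2 occupied columns (rows); two touched sides would
force |γ| ≥ 2l. With a single touched side, say the right one, γ has at most one boundary bond per
occupied row, and there are fewer than |γ|/4 occupied rows. Hence Δ_γH ≥ |γ| ≥ 2|γ|/9.
-/

lemma mem_nbrs {x y : Site} :
    y ∈ nbrs x ↔
      y = (x.1 + 1, x.2) ∨ y = (x.1 - 1, x.2) ∨ y = (x.1, x.2 + 1) ∨ y = (x.1, x.2 - 1) := by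
  simp [nbrs]

lemma mem_nbrs_comm {x y : Site} : y ∈ nbrs x ↔ x ∈ nbrs y := by
  suffices ∀ x y : Site, y ∈ nbrs x → x ∈ nbrs y from ⟨this x y, this y x⟩
  intro x y h
  rcases mem_nbrs.1 h with rfl | rfl | rfl | rfl <;> simp [mem_nbrs]

lemma d1_eq_one_of_mem_nbrs {x y : Site} (h : y ∈ nbrs x) : d1 x y = 1 := by
  rcases mem_nbrs.1 h with rfl | rfl | rfl | rfl <;> simp [d1]

lemma mem_lamBox {l : ℕ} {x : Site} :
    x ∈ lamBox l ↔ lamLo l ≤ x.1 ∧ x.1 ≤ lamHi l ∧ lamLo l ≤ x.2 ∧ x.2 ≤ lamHi l := by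
  simp only [lamBox, Finset.mem_Icc, Prod.le_def]
  tauto

lemma le_add_one_of_d1_eq_one {p q : Site} (h : d1 p q = 1) :
    q.1 ≤ p.1 + 1 ∧ q.2 ≤ p.2 + 1 := by
  unfold d1 at h
  cases abs_cases (p.1 - q.1) <;> cases abs_cases (p.2 - q.2) <;> omega

lemma ChainIn.cons {d : Site → Site → ℤ} {S : Set Site} {x y z : Site} (hx : x ∈ S)
    (hxy : d x y = 1) (h : ChainIn d S y z) : ChainIn d S x z := by
  obtain ⟨_ | ⟨a, t⟩, hc, hh, hl, hm⟩ := h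
  · simp at hh
  · obtain rfl : a = y := by simpa using hh
    refine ⟨x :: a :: t, List.IsChain.cons_cons hxy hc, rfl, by simpa using hl, ?_⟩
    rintro b (_ | ⟨_, hb⟩)
    exacts [hx, hm b hb]

lemma chainIn_add_smul {S : Set Site} {e : Site} (he : |e.1| + |e.2| = 1) (n : ℕ) :
    ∀ x : Site, (∀ k : ℕ, x + (k : ℤ) • e ∈ S) → ChainIn d1 S x (x + (n : ℤ) • e) := by
  have hshift (x : Site) (k : ℕ) : x + ((k + 1 : ℕ) : ℤ) • e = x + e + (k : ℤ) • e := by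
    rw [Nat.cast_succ, add_smul, one_smul]; abel
  induction n with
  | zero => exact fun x hS => ⟨[x], List.isChain_singleton x, by simp, by simp, by simpa using hS 0⟩
  | succ n ih =>
    intro x hS
    refine ChainIn.cons (y := x + e) (by simpa using hS 0) (by simpa [d1] using he) ?_
    rw [hshift]
    exact ih (x + e) fun k => hshift x k ▸ hS (k + 1)

lemma infinite_l1Comp_of_ray {S : Set Site} {x e : Site} (he : |e.1| + |e.2| = 1)
    (hS : ∀ k : ℕ, x + (k : ℤ) • e ∈ S) : (l1Comp S x).Infinite := by
  refine Set.infinite_of_injective_forall_mem (f := fun k : ℕ => x + (k : ℤ) • e) ?_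
    fun n => chainIn_add_smul he n x hS
  intro a b hab
  simp only [add_right_inj, Prod.ext_iff, Prod.smul_fst, Prod.smul_snd, smul_eq_mul] at hab
  by_cases h : e.1 = 0
  · have he2 : e.2 ≠ 0 := fun h' => by simp [h, h'] at he
    exact_mod_cast mul_right_cancel₀ he2 hab.2
  · exact_mod_cast mul_right_cancel₀ h hab.1

lemma exists_mem_ray_of_mem_fill {C : Finset Site} {x e : Site} (hx : x ∈ fill C)
    (he : |e.1| + |e.2| = 1) : ∃ k : ℕ, x + (k : ℤ) • e ∈ C := by
  by_contra! h
  rcases hx with hx | hx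
  · exact h 0 (by simpa using hx)
  · exact infinite_l1Comp_of_ray he (fun k => h k) hx

lemma fill_subset_lamBox {l : ℕ} {C : Finset Site} (hC : ↑C ⊆ (lamBox l : Set Site)) :
    fill C ⊆ lamBox l := by
  intro x hx
  by_contra hxB
  rw [Finset.mem_coe, mem_lamBox] at hxB
  have hray (e : Site) (he : |e.1| + |e.2| = 1)
      (hout : ∀ k : ℕ, x + (k : ℤ) • e ∉ lamBox l) : False := by
    obtain ⟨k, hk⟩ := exists_mem_ray_of_mem_fill hx he
    exact hout k (hC hk)
  rcases (by omega : x.1 < lamLo l ∨ lamHi l < x.1 ∨ x.2 < lamLo l ∨ lamHi l < x.2)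
    with h | h | h | h
  · exact hray (-1, 0) (by norm_num) fun k hk => by simp [mem_lamBox] at hk; omega
  · exact hray (1, 0) (by norm_num) fun k hk => by simp [mem_lamBox] at hk; omega
  · exact hray (0, -1) (by norm_num) fun k hk => by simp [mem_lamBox] at hk; omega
  · exact hray (0, 1) (by norm_num) fun k hk => by simp [mem_lamBox] at hk; omega

lemma mem_of_mem_fill_of_notMem_fill {C : Finset Site} {x y : Site} (hx : x ∈ fill C)
    (hy : y ∉ fill C) (hxy : d1 x y = 1) : x ∈ C := by
  by_contra hxC
  exact hy (Or.inr <| (hx.resolve_left hxC).subset fun z hz => ChainIn.cons hxC hxy hz)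

lemma exists_mem_eq_of_isChain {α : Type*} {R : α → α → Prop} {f : α → ℤ}
    (hf : ∀ p q, R p q → f q ≤ f p + 1) {L : List α} (hL : L.IsChain R) {a b : α}
    (ha : L.head? = some a) (hb : L.getLast? = some b) {m : ℤ} (ham : f a ≤ m) (hmb : m ≤ f b) :
    ∃ p ∈ L, f p = m := by
  induction L generalizing a with
  | nil => simp at ha
  | cons x t ih =>
    obtain rfl : x = a := by simpa using ha
    rcases eq_or_lt_of_le ham with hx | hx
    · exact ⟨x, List.mem_cons_self, hx⟩
    cases t with
    | nil =>
      obtain rfl : x = b := by simpa using hb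
      omega
    | cons y t =>
      have hxy := (List.isChain_cons_cons.1 hL).1
      obtain ⟨p, hp, hpm⟩ := ih (List.isChain_cons_cons.1 hL).2 rfl (by simpa using hb)
        (by linarith [hf x y hxy])
      exact ⟨p, List.mem_cons_of_mem x hp, hpm⟩

lemma ordConnected_image_of_connIn {S : Set Site} (hS : ConnIn d1 S) {f : Site → ℤ}
    (hf : ∀ p q, d1 p q = 1 → f q ≤ f p + 1) : (f '' S).OrdConnected := by
  refine ⟨?_⟩
  rintro _ ⟨a, ha, rfl⟩ _ ⟨b, hb, rfl⟩ m ⟨ham, hmb⟩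
  obtain ⟨L, hL, hh, hl, hLS⟩ := hS a ha b hb
  obtain ⟨p, hp, rfl⟩ := exists_mem_eq_of_isChain hf hL hh hl ham hmb
  exact ⟨p, hLS p hp, rfl⟩

lemma image_fst_fill {C : Finset Site} (hC : ConnIn d1 ↑C) :
    Prod.fst '' fill C = Prod.fst '' (C : Set Site) := by
  refine subset_antisymm ?_ (Set.image_mono Set.subset_union_left)
  rintro _ ⟨x, hx, rfl⟩
  obtain ⟨k, hk⟩ := exists_mem_ray_of_mem_fill hx (e := (1, 0)) (by norm_num)
  obtain ⟨k', hk'⟩ := exists_mem_ray_of_mem_fill hx (e := (-1, 0)) (by norm_num)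
  refine (ordConnected_image_of_connIn hC fun p q h => (le_add_one_of_d1_eq_one h).1).out
    ⟨_, hk', rfl⟩ ⟨_, hk, rfl⟩ ⟨?_, ?_⟩ <;> simp

lemma image_snd_fill {C : Finset Site} (hC : ConnIn d1 ↑C) :
    Prod.snd '' fill C = Prod.snd '' (C : Set Site) := by
  refine subset_antisymm ?_ (Set.image_mono Set.subset_union_left)
  rintro _ ⟨x, hx, rfl⟩
  obtain ⟨k, hk⟩ := exists_mem_ray_of_mem_fill hx (e := (0, 1)) (by norm_num)
  obtain ⟨k', hk'⟩ := exists_mem_ray_of_mem_fill hx (e := (0, -1)) (by norm_num)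
  refine (ordConnected_image_of_connIn hC fun p q h => (le_add_one_of_d1_eq_one h).2).out
    ⟨_, hk', rfl⟩ ⟨_, hk, rfl⟩ ⟨?_, ?_⟩ <;> simp

lemma sub_add_one_le_card_of_ordConnected {I : Finset ℤ} (hI : (I : Set ℤ).OrdConnected)
    {a b : ℤ} (ha : a ∈ I) (hb : b ∈ I) : b + 1 - a ≤ #I := by
  have := Finset.card_le_card (s := Finset.Icc a b) fun m hm => by
    simpa using hI.out ha hb (by simpa using hm)
  rw [Int.card_Icc] at this
  omega

lemma eq_of_dualBond_eq {x y x' y' : Site} (hy : y ∈ nbrs x) (hy' : y' ∈ nbrs x')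
    (h : dualBond x y = dualBond x' y') : (x = x' ∧ y = y') ∨ (x = y' ∧ y = x') := by
  rcases mem_nbrs.1 hy with rfl | rfl | rfl | rfl <;>
    rcases mem_nbrs.1 hy' with rfl | rfl | rfl | rfl <;>
    unfold dualBond at h <;> split_ifs at h <;>
    simp only [Sym2.eq_iff, Prod.ext_iff, min_def] at h ⊢ <;> split_ifs at h <;> omega

lemma card_contourOf (Θ : Finset Site) :
    #(contourOf Θ) = ∑ x ∈ Θ, #((nbrs x).filter (· ∉ Θ)) := by
  rw [contourOf, Finset.card_biUnion]
  · refine Finset.sum_congr rfl fun x hx => Finset.card_image_of_injOn ?_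
    intro y hy y' hy' h
    simp only [Finset.coe_filter, Set.mem_ofPred_eq] at hy hy'
    rcases eq_of_dualBond_eq hy.1 hy'.1 h with ⟨-, h⟩ | ⟨rfl, -⟩
    exacts [h, (hy'.2 hx).elim]
  · intro x hx x' hx' hne
    simp only [Function.onFun, Finset.disjoint_left, Finset.mem_image, Finset.mem_filter]
    rintro _ ⟨y, ⟨hy, hyΘ⟩, rfl⟩ ⟨y', ⟨hy', hy'Θ⟩, h⟩
    rcases eq_of_dualBond_eq hy' hy h with ⟨rfl, -⟩ | ⟨rfl, -⟩
    exacts [hne rfl, hyΘ hx']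

lemma card_filter_nbrs (x : Site) (P : Site → Prop) [DecidablePred P] :
    #((nbrs x).filter P) = (if P (x.1 + 1, x.2) then 1 else 0) + (if P (x.1 - 1, x.2) then 1 else 0)
      + (if P (x.1, x.2 + 1) then 1 else 0) + (if P (x.1, x.2 - 1) then 1 else 0) := by
  rw [Finset.card_filter, nbrs, Finset.sum_insert, Finset.sum_insert, Finset.sum_pair]
  · ring
  all_goals simp [Prod.ext_iff] <;> omega

lemma sum_card_filter_nbrs (Θ : Finset Site) (P : Site → Prop) [DecidablePred P] :
    ∑ x ∈ Θ, #((nbrs x).filter P) =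
      #(Θ.filter fun x => P (x.1 + 1, x.2)) + #(Θ.filter fun x => P (x.1 - 1, x.2))
        + #(Θ.filter fun x => P (x.1, x.2 + 1)) + #(Θ.filter fun x => P (x.1, x.2 - 1)) := by
  rw [Finset.sum_congr rfl fun x _ => card_filter_nbrs x P]
  simp only [Finset.sum_add_distrib, Finset.card_filter]

lemma card_image_le_card_filter_notMem {α β γ : Type*} [DecidableEq α] [LinearOrder β]
    [DecidableEq γ] (Θ : Finset α) {s : α → α} {f : α → β} {g : α → γ}
    (hf : ∀ x, f x < f (s x)) (hg : ∀ x, g (s x) = g x) :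
    #(Θ.image g) ≤ #(Θ.filter fun x => s x ∉ Θ) := by
  -- the f-largest point of each g-fibre of Θ is pushed out of Θ by s
  refine le_trans (Finset.card_le_card ?_) (Finset.card_image_le (f := g))
  intro j hj
  obtain ⟨x₀, hx₀, rfl⟩ := Finset.mem_image.1 hj
  obtain ⟨x, hx, hmax⟩ :=
    (Θ.filter fun x => g x = g x₀).exists_max_image f ⟨x₀, Finset.mem_filter.2 ⟨hx₀, rfl⟩⟩
  rw [Finset.mem_filter] at hx
  refine Finset.mem_image.2 ⟨x, Finset.mem_filter.2 ⟨hx.1, fun hs => ?_⟩, hx.2⟩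
  exact (hf x).not_ge (hmax (s x) (Finset.mem_filter.2 ⟨hs, (hg x).trans hx.2⟩))

lemma two_mul_card_image_add_le_card_contourOf (Θ : Finset Site) :
    2 * #(Θ.image Prod.fst) + 2 * #(Θ.image Prod.snd) ≤ #(contourOf Θ) := by
  have hR := card_image_le_card_filter_notMem Θ (s := fun x => (x.1 + 1, x.2))
    (f := Prod.fst) (g := Prod.snd) (fun x => by simp) fun x => rfl
  have hL := card_image_le_card_filter_notMem Θ (s := fun x => (x.1 - 1, x.2))
    (f := fun x => -x.1) (g := Prod.snd) (fun x => by simp) fun x => rfl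
  have hU := card_image_le_card_filter_notMem Θ (s := fun x => (x.1, x.2 + 1))
    (f := Prod.snd) (g := Prod.fst) (fun x => by simp) fun x => rfl
  have hD := card_image_le_card_filter_notMem Θ (s := fun x => (x.1, x.2 - 1))
    (f := fun x => -x.2) (g := Prod.fst) (fun x => by simp) fun x => rfl
  rw [card_contourOf, sum_card_filter_nbrs]
  omega

lemma card_filter_fst_eq_le_card_image_snd (Θ : Finset Site) (c : ℤ) :
    #(Θ.filter (·.1 = c)) ≤ #(Θ.image Prod.snd) := by
  refine Finset.card_le_card_of_injOn Prod.snd (fun x hx => Finset.mem_image_of_mem _ ?_) ?_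
  · exact (Finset.mem_filter.1 hx).1
  · intro x hx y hy h
    simp only [Finset.coe_filter, Set.mem_ofPred_eq] at hx hy
    exact Prod.ext (hx.2.trans hy.2.symm) h

lemma card_filter_snd_eq_le_card_image_fst (Θ : Finset Site) (c : ℤ) :
    #(Θ.filter (·.2 = c)) ≤ #(Θ.image Prod.fst) := by
  refine Finset.card_le_card_of_injOn Prod.fst (fun x hx => Finset.mem_image_of_mem _ ?_) ?_
  · exact (Finset.mem_filter.1 hx).1
  · intro x hx y hy h
    simp only [Finset.coe_filter, Set.mem_ofPred_eq] at hx hy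
    exact Prod.ext h (hx.2.trans hy.2.symm)

lemma sum_card_filter_nbrs_notMem_lamBox {l : ℕ} {Θ : Finset Site} (hΘ : Θ ⊆ lamBox l) :
    ∑ x ∈ Θ, #((nbrs x).filter (· ∉ lamBox l)) =
      #(Θ.filter (·.1 = lamHi l)) + #(Θ.filter (·.1 = lamLo l))
        + #(Θ.filter (·.2 = lamHi l)) + #(Θ.filter (·.2 = lamLo l)) := by
  have hside (s : Site → Site) (p : Site → Prop) [DecidablePred p]
      (hsp : ∀ x ∈ lamBox l, s x ∉ lamBox l ↔ p x) :
      Θ.filter (fun x => s x ∉ lamBox l) = Θ.filter p :=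
    Finset.filter_congr fun x hx => hsp x (hΘ hx)
  rw [sum_card_filter_nbrs, hside _ (·.1 = lamHi l), hside _ (·.1 = lamLo l),
    hside _ (·.2 = lamHi l), hside _ (·.2 = lamLo l)] <;>
  · intro x hx
    simp only [mem_lamBox] at hx ⊢
    omega

lemma sum_card_filter_nbrs_notMem_eq_add {B Θ : Finset Site} (hΘB : Θ ⊆ B) :
    ∑ x ∈ Θ, #((nbrs x).filter (· ∉ Θ)) =
      ∑ x ∈ Θ, #((nbrs x).filter fun y => y ∈ B ∧ y ∉ Θ) + ∑ x ∈ Θ, #((nbrs x).filter (· ∉ B)) := by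
  rw [← Finset.sum_add_distrib]
  refine Finset.sum_congr rfl fun x _ => ?_
  rw [← Finset.card_union_of_disjoint (Finset.disjoint_filter.2 fun y _ h h' => h'.elim h.1)]
  congr 1
  ext y
  simp only [Finset.mem_filter, Finset.mem_union]
  constructor
  · intro h; by_cases hy : y ∈ B <;> tauto
  · rintro (h | h)
    exacts [⟨h.1, h.2.2⟩, ⟨h.1, fun hy => h.2 (hΘB hy)⟩]

lemma card_filter_eq_zero_or_mem_image {α β : Type*} [DecidableEq β] (s : Finset α) (f : α → β)
    (c : β) : #(s.filter (f · = c)) = 0 ∨ c ∈ s.image f := by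
  rcases (s.filter (f · = c)).eq_empty_or_nonempty with h | ⟨x, hx⟩
  · exact Or.inl (by rw [h, Finset.card_empty])
  · rw [Finset.mem_filter] at hx
    exact Or.inr (Finset.mem_image.2 ⟨x, hx⟩)

theorem four_mul_sum_card_nbrs_notMem_lamBox_le {l : ℕ} {C Θ : Finset Site} (hC : ConnIn d1 ↑C)
    (hΘ : (Θ : Set Site) = fill C) (hΘB : Θ ⊆ lamBox l) (h0 : ((0 : ℤ), (0 : ℤ)) ∈ Θ)
    (hlen : #(contourOf Θ) < 2 * l) :
    4 * ∑ x ∈ Θ, #((nbrs x).filter (· ∉ lamBox l)) ≤ #(contourOf Θ) := by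
  have hX : ((Θ.image Prod.fst : Finset ℤ) : Set ℤ).OrdConnected := by
    rw [Finset.coe_image, hΘ, image_fst_fill hC]
    exact ordConnected_image_of_connIn hC fun p q h => (le_add_one_of_d1_eq_one h).1
  have hY : ((Θ.image Prod.snd : Finset ℤ) : Set ℤ).OrdConnected := by
    rw [Finset.coe_image, hΘ, image_snd_fill hC]
    exact ordConnected_image_of_connIn hC fun p q h => (le_add_one_of_d1_eq_one h).2
  have h0X : (0 : ℤ) ∈ Θ.image Prod.fst := Finset.mem_image_of_mem _ h0
  have h0Y : (0 : ℤ) ∈ Θ.image Prod.snd := Finset.mem_image_of_mem _ h0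
  have hR := (card_filter_eq_zero_or_mem_image Θ Prod.fst (lamHi l)).imp_right
    (sub_add_one_le_card_of_ordConnected hX h0X)
  have hL := (card_filter_eq_zero_or_mem_image Θ Prod.fst (lamLo l)).imp_right
    (sub_add_one_le_card_of_ordConnected hX · h0X)
  have hLR := (card_filter_eq_zero_or_mem_image Θ Prod.fst (lamLo l)).imp_right fun hL =>
    (card_filter_eq_zero_or_mem_image Θ Prod.fst (lamHi l)).imp_right
      (sub_add_one_le_card_of_ordConnected hX hL)
  have hU := (card_filter_eq_zero_or_mem_image Θ Prod.snd (lamHi l)).imp_right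
    (sub_add_one_le_card_of_ordConnected hY h0Y)
  have hD := (card_filter_eq_zero_or_mem_image Θ Prod.snd (lamLo l)).imp_right
    (sub_add_one_le_card_of_ordConnected hY · h0Y)
  have hDU := (card_filter_eq_zero_or_mem_image Θ Prod.snd (lamLo l)).imp_right fun hD =>
    (card_filter_eq_zero_or_mem_image Θ Prod.snd (lamHi l)).imp_right
      (sub_add_one_le_card_of_ordConnected hY hD)
  have := two_mul_card_image_add_le_card_contourOf Θ
  have := card_filter_fst_eq_le_card_image_snd Θ (lamHi l)
  have := card_filter_fst_eq_le_card_image_snd Θ (lamLo l)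
  have := card_filter_snd_eq_le_card_image_fst Θ (lamHi l)
  have := card_filter_snd_eq_le_card_image_fst Θ (lamLo l)
  rw [sum_card_filter_nbrs_notMem_lamBox hΘB]
  unfold lamLo lamHi at *
  omega

section Energy

variable {B Θ : Finset Site} {σ : Site → ℤ}

lemma sum_sum_nbrs_comm {M : Type*} [AddCommMonoid M] (B : Finset Site) (F : Site → Site → M) :
    ∑ x ∈ B, ∑ y ∈ (nbrs x).filter (· ∈ B), F x y =
      ∑ x ∈ B, ∑ y ∈ (nbrs x).filter (· ∈ B), F y x := by
  have h (x : Site) : (nbrs x).filter (· ∈ B) = B.filter (· ∈ nbrs x) := by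
    ext y
    simp [and_comm]
  simp only [h, Finset.sum_filter]
  rw [Finset.sum_comm]
  exact Finset.sum_congr rfl fun x _ =>
    Finset.sum_congr rfl fun y _ => if_congr mem_nbrs_comm rfl rfl

lemma sum_sum_nbrs_flipC_sub (hΘB : Θ ⊆ B)
    (hint : ∀ x ∈ Θ, ∀ y ∈ nbrs x, y ∈ B → y ∉ Θ → σ x * σ y = -1) :
    ∑ x ∈ B, ∑ y ∈ (nbrs x).filter (· ∈ B), (flipC Θ σ x * flipC Θ σ y - σ x * σ y) =
      4 * ∑ x ∈ Θ, (#((nbrs x).filter fun y => y ∈ B ∧ y ∉ Θ) : ℤ) := by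
  let g : Site → Site → ℤ := fun x y => if x ∈ Θ ∧ y ∉ Θ then 1 else 0
  have hterm : ∀ x ∈ B, ∀ y ∈ (nbrs x).filter (· ∈ B),
      flipC Θ σ x * flipC Θ σ y - σ x * σ y = 2 * g x y + 2 * g y x := by
    intro x hx y hy
    rw [Finset.mem_filter] at hy
    by_cases hxΘ : x ∈ Θ <;> by_cases hyΘ : y ∈ Θ <;> simp only [g, flipC, hxΘ, hyΘ] <;> norm_num
    · linarith [hint x hxΘ y hy.1 hy.2 hyΘ]
    · linarith [hint y hyΘ x (mem_nbrs_comm.1 hy.1) hx hxΘ]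
  have hg : ∑ x ∈ B, ∑ y ∈ (nbrs x).filter (· ∈ B), g x y =
      ∑ x ∈ Θ, (#((nbrs x).filter fun y => y ∈ B ∧ y ∉ Θ) : ℤ) := by
    refine (Finset.sum_subset hΘB fun x _ hx => by simp [g, hx]).symm.trans ?_
    refine Finset.sum_congr rfl fun x hx => ?_
    simp only [g, hx, true_and]
    rw [← Finset.filter_filter, Finset.natCast_card_filter]
  rw [Finset.sum_congr rfl fun x hx => Finset.sum_congr rfl (hterm x hx)]
  simp only [Finset.sum_add_distrib, ← Finset.mul_sum]
  rw [← sum_sum_nbrs_comm B g, hg]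
  ring

lemma sum_sum_nbrs_field_sub_flipC_le (hΘB : Θ ⊆ B) (ω : Site → ℝ)
    (hbd : ∀ x ∈ Θ, ∀ y ∈ nbrs x, y ∉ B → (σ x : ℝ) * ω y ≤ 1) :
    ∑ x ∈ B, ∑ y ∈ (nbrs x).filter (· ∉ B), ((σ x : ℝ) * ω y - (flipC Θ σ x : ℝ) * ω y) ≤
      2 * ∑ x ∈ Θ, (#((nbrs x).filter (· ∉ B)) : ℝ) := by
  refine (Finset.sum_subset hΘB fun x _ hx => by simp [flipC, hx]).symm.trans_le ?_
  rw [Finset.mul_sum]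
  refine Finset.sum_le_sum fun x hx => ?_
  rw [Finset.card_eq_sum_ones, Nat.cast_sum, Finset.mul_sum]
  refine Finset.sum_le_sum fun y hy => ?_
  rw [Finset.mem_filter] at hy
  have := hbd x hx y hy.1 hy.2
  simp only [flipC, hx, if_true, Int.cast_neg, Nat.cast_one]
  linarith

theorem sub_le_dH_singleton {l : ℕ} (ω : Site → ℝ) (hΘB : Θ ⊆ lamBox l)
    (hint : ∀ x ∈ Θ, ∀ y ∈ nbrs x, y ∈ lamBox l → y ∉ Θ → σ x * σ y = -1)
    (hbd : ∀ x ∈ Θ, ∀ y ∈ nbrs x, y ∉ lamBox l → (σ x : ℝ) * ω y ≤ 1) :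
    2 * ((∑ x ∈ Θ, #((nbrs x).filter fun y => y ∈ lamBox l ∧ y ∉ Θ) : ℕ) : ℝ)
      - 2 * ((∑ x ∈ Θ, #((nbrs x).filter (· ∉ lamBox l)) : ℕ) : ℝ) ≤ dH l ω [Θ] σ := by
  have hA := congrArg (Int.cast : ℤ → ℝ) (sum_sum_nbrs_flipC_sub hΘB hint)
  have hF := sum_sum_nbrs_field_sub_flipC_le hΘB ω hbd
  push_cast at hA
  simp only [Finset.sum_sub_distrib] at hA hF
  simp only [dH, List.foldr, Ham]
  push_cast
  linarith

end Energy

section Contour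

variable {l : ℕ} {σ : Site → ℤ} {ε : ℤ} {C Θ : Finset Site}

lemma IsCluster.subset_lamBox_of_coe_eq_fill (hC : IsCluster l σ ε C)
    (hΘ : (Θ : Set Site) = fill C) : Θ ⊆ lamBox l := by
  rw [← Finset.coe_subset, hΘ]
  exact fill_subset_lamBox fun x hx => (hC.2.1 x hx).1

lemma mem_of_coe_eq_fill_of_nbr_notMem (hΘ : (Θ : Set Site) = fill C) {x y : Site} (hx : x ∈ Θ)
    (hy : y ∈ nbrs x) (hyΘ : y ∉ Θ) : x ∈ C :=
  mem_of_mem_fill_of_notMem_fill (by rwa [← hΘ]) (by rwa [← hΘ]) (d1_eq_one_of_mem_nbrs hy)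

lemma IsCluster.eq_neg_of_notMem (hC : IsCluster l σ ε C)
    (hσ : ∀ x ∈ lamBox l, σ x = 1 ∨ σ x = -1) (hε : ε = 1 ∨ ε = -1)
    {x y : Site} (hx : x ∈ C) (hy : y ∈ lamBox l) (hyC : y ∉ C) (hxy : d1 x y = 1) :
    σ y = -ε := by
  have : σ y ≠ ε := fun h => hyC (hC.2.2.2 y hy h ⟨x, hx, hxy⟩)
  rcases hσ y hy with h | h <;> omega

lemma IsCluster.mul_eq_neg_one_of_coe_eq_fill (hC : IsCluster l σ ε C)
    (hΘ : (Θ : Set Site) = fill C) (hσ : ∀ x ∈ lamBox l, σ x = 1 ∨ σ x = -1)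
    (hε : ε = 1 ∨ ε = -1) {x y : Site} (hx : x ∈ Θ) (hy : y ∈ nbrs x) (hyB : y ∈ lamBox l)
    (hyΘ : y ∉ Θ) : σ x * σ y = -1 := by
  have hxC := mem_of_coe_eq_fill_of_nbr_notMem hΘ hx hy hyΘ
  have hyC : y ∉ C := fun h => hyΘ (by simp [← Finset.mem_coe, hΘ, fill, h])
  rw [(hC.2.1 x hxC).2, hC.eq_neg_of_notMem hσ hε hxC hyB hyC (d1_eq_one_of_mem_nbrs hy)]
  rcases hε with rfl | rfl <;> rfl

lemma IsCluster.mul_le_one_of_coe_eq_fill (hC : IsCluster l σ ε C)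
    (hΘ : (Θ : Set Site) = fill C) (hε : ε = 1 ∨ ε = -1) {ω : Site → ℝ}
    (hω : ∀ y ∈ extBdry l, |ω y| ≤ 1) {x y : Site} (hx : x ∈ Θ) (hy : y ∈ nbrs x)
    (hyB : y ∉ lamBox l) : (σ x : ℝ) * ω y ≤ 1 := by
  have hΘB := hC.subset_lamBox_of_coe_eq_fill hΘ
  have hxC := mem_of_coe_eq_fill_of_nbr_notMem hΘ hx hy fun h => hyB (hΘB h)
  have hωy := abs_le.1 (hω y ⟨hyB, x, hΘB hx, d1_eq_one_of_mem_nbrs hy⟩)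
  rw [(hC.2.1 x hxC).2]
  rcases hε with rfl | rfl <;> push_cast <;> linarith

end Contour

/-- If an (ε)-contour `γ` at `σ` in `Λ(l)` encloses the origin
(`0 ∈ Θ(γ)`) and `|γ| < 2l`, then `Δ_γ H^ω(σ) ≥ 2|γ|/9`. -/
theorem stmt10 (l : ℕ) (σ : Site → ℤ) (hσ : ∀ x ∈ lamBox l, σ x = 1 ∨ σ x = -1)
    (ε : ℤ) (hε : ε = 1 ∨ ε = -1) (ω : Site → ℝ)
    (hω : ∀ y ∈ extBdry l, |ω y| ≤ 1)
    (Θ : Finset Site) (hc : IsEContour l σ ε Θ)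
    (h0 : ((0 : ℤ), (0 : ℤ)) ∈ Θ) (hlen : (contourOf Θ).card < 2 * l) :
    2 * ((contourOf Θ).card : ℝ) / 9 ≤ dH l ω [Θ] σ := by
  obtain ⟨C, hC, hΘ⟩ := hc
  have hΘB := hC.subset_lamBox_of_coe_eq_fill hΘ
  have henergy := sub_le_dH_singleton ω hΘB
    (fun x hx y hy => hC.mul_eq_neg_one_of_coe_eq_fill hΘ hσ hε hx hy)
    (fun x hx y hy => hC.mul_le_one_of_coe_eq_fill hΘ hε hω hx hy)
  have hout := four_mul_sum_card_nbrs_notMem_lamBox_le hC.2.2.1 hΘ hΘB h0 hlen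
  rw [card_contourOf, sum_card_filter_nbrs_notMem_eq_add hΘB] at hout ⊢
  generalize ∑ x ∈ Θ, #((nbrs x).filter fun y => y ∈ lamBox l ∧ y ∉ Θ) = nIn at *
  generalize ∑ x ∈ Θ, #((nbrs x).filter (· ∉ lamBox l)) = nOut at *
  have hout' : (4 * nOut : ℝ) ≤ nIn + nOut := by exact_mod_cast hout
  push_cast
  linarith
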